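/- Let λ ∈ [0, 1), let ω be holomorphic on the open unit disk D with |ω(z)| ≤ 1 for all z ∈ D, let c ∈ ℂ, and let A_λ denote the continuous extension to the closed unit disk of A_λ(z) = 1 + c·z − λ·z·∫₀ᶻ ω(t) dt (segment integral). Then for all z₁, z₂ in the closed unit disk with z₁ ≠ z₂, |z₁·A_λ(z₂) − z₂·A_λ(z₁)| ≥ (1 − λ·|z₁·z₂|)·|z₁ − z₂| > 0. In particular the map z ↦ z/A_λ(z) is injective on the set of points of the closed unit disk where A_λ ≠ 0. (This is Theorem 2(b): a meromorphic f with f(0) = 0, f'(0) = 1 satisfying |z/f(z) − z(z/f(z))' − 1| < λ on D for some λ ∈ (0,1) is univalent in the closed unit disk.) -/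

import Mathlib

/-!
Write `Φ(z) = ∫₀ᶻ ω` and `A(z) = 1 + c z - λ z Φ(z)`. Then
`z₁ A(z₂) - z₂ A(z₁) = (z₁ - z₂) - λ z₁ z₂ (Φ(z₂) - Φ(z₁))`, the terms in `c` cancelling.
Since `ω` is holomorphic on the disk, it has a primitive there and `Φ` is that primitive
(normalised at `0`); as `|ω| ≤ 1`, `Φ` is `1`-Lipschitz. The reverse triangle inequality gives
the bound on the open disk, and continuity of `A` carries it to the closed disk, where the
lower bound is positive off the diagonal; injectivity of `z / A(z)` follows.
-/

open Complex Metric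

/-- Contour integral of `ω` along the straight line segment from `z₁` to `z₂`:
`∫_{z₁}^{z₂} ω(t) dt = (z₂ - z₁) ∫₀¹ ω(z₁ + s (z₂ - z₁)) ds`. -/
noncomputable def segInt (ω : ℂ → ℂ) (z₁ z₂ : ℂ) : ℂ :=
  (z₂ - z₁) * ∫ s in (0:ℝ)..(1:ℝ), ω (z₁ + (s : ℂ) * (z₂ - z₁))

theorem segInt_eq_sub_of_hasDerivAt {ω F : ℂ → ℂ} {z₁ z₂ : ℂ}
    (hF : ∀ z ∈ segment ℝ z₁ z₂, HasDerivAt F (ω z) z)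
    (hω : ContinuousOn ω (segment ℝ z₁ z₂)) :
    segInt ω z₁ z₂ = F z₂ - F z₁ := by
  have hmem : ∀ s ∈ Set.uIcc (0 : ℝ) 1, z₁ + (s : ℂ) * (z₂ - z₁) ∈ segment ℝ z₁ z₂ := by
    intro s hs
    rw [Set.uIcc_of_le zero_le_one] at hs
    rw [segment_eq_image']
    exact ⟨s, hs, by simp only [Complex.real_smul]⟩
  have hderiv : ∀ s ∈ Set.uIcc (0 : ℝ) 1, HasDerivAt (fun s : ℝ => F (z₁ + s * (z₂ - z₁)))
      ((z₂ - z₁) * ω (z₁ + s * (z₂ - z₁))) s := by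
    intro s hs
    have hline : HasDerivAt (fun w : ℂ => z₁ + w * (z₂ - z₁)) (z₂ - z₁) s := by
      simpa using ((hasDerivAt_id (s : ℂ)).mul_const (z₂ - z₁)).const_add z₁
    simpa [mul_comm] using ((hF _ (hmem s hs)).comp (s : ℂ) hline).comp_ofReal
  have hint : IntervalIntegrable (fun s : ℝ => (z₂ - z₁) * ω (z₁ + s * (z₂ - z₁)))
      MeasureTheory.volume 0 1 :=
    (continuousOn_const.mul (hω.comp (by fun_prop) hmem)).intervalIntegrable
  rw [segInt, ← intervalIntegral.integral_const_mul,
    intervalIntegral.integral_eq_sub_of_hasDerivAt hderiv hint]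
  simp

theorem norm_segInt_sub_segInt_le {ω : ℂ → ℂ} {c a z₁ z₂ : ℂ} {r M : ℝ}
    (hω : DifferentiableOn ℂ ω (ball c r)) (hbd : ∀ z ∈ ball c r, ‖ω z‖ ≤ M)
    (ha : a ∈ ball c r) (hz₁ : z₁ ∈ ball c r) (hz₂ : z₂ ∈ ball c r) :
    ‖segInt ω a z₂ - segInt ω a z₁‖ ≤ M * ‖z₂ - z₁‖ := by
  obtain ⟨F, hF⟩ := hω.isExactOn_ball
  have hsegInt : ∀ z ∈ ball c r, segInt ω a z = F z - F a := fun z hz =>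
    have hseg := (convex_ball c r).segment_subset ha hz
    segInt_eq_sub_of_hasDerivAt (fun w hw => hF w (hseg hw)) (hω.continuousOn.mono hseg)
  rw [hsegInt z₁ hz₁, hsegInt z₂ hz₂, sub_sub_sub_cancel_right]
  exact (convex_ball c r).norm_image_sub_le_of_norm_hasDerivWithin_le
    (fun z hz => (hF z hz).hasDerivWithinAt) hbd hz₁ hz₂

theorem le_norm_mul_sub_mul_of_lipschitz {lam : ℝ} (hlam : 0 ≤ lam) (c : ℂ) {P : ℂ → ℂ}
    {z₁ z₂ : ℂ} (hP : ‖P z₂ - P z₁‖ ≤ ‖z₁ - z₂‖) :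
    (1 - lam * ‖z₁ * z₂‖) * ‖z₁ - z₂‖ ≤
      ‖z₁ * (1 + c * z₂ - lam * z₂ * P z₂) - z₂ * (1 + c * z₁ - lam * z₁ * P z₁)‖ := by
  have hidentity : z₁ * (1 + c * z₂ - lam * z₂ * P z₂) - z₂ * (1 + c * z₁ - lam * z₁ * P z₁)
      = (z₁ - z₂) - lam * (z₁ * z₂) * (P z₂ - P z₁) := by ring
  have hperturbation : ‖lam * (z₁ * z₂) * (P z₂ - P z₁)‖ ≤ lam * ‖z₁ * z₂‖ * ‖z₁ - z₂‖ := by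
    rw [norm_mul, norm_mul, norm_real, Real.norm_of_nonneg hlam]
    gcongr
  rw [hidentity]
  calc (1 - lam * ‖z₁ * z₂‖) * ‖z₁ - z₂‖
      = ‖z₁ - z₂‖ - lam * ‖z₁ * z₂‖ * ‖z₁ - z₂‖ := by ring
    _ ≤ ‖z₁ - z₂‖ - ‖lam * (z₁ * z₂) * (P z₂ - P z₁)‖ := by linarith
    _ ≤ _ := norm_sub_norm_le _ _

theorem forall_closedBall_le_norm_mul_sub_mul {lam : ℝ} {A : ℂ → ℂ} {c : ℂ} {r : ℝ}
    (hr : r ≠ 0) (hA : ContinuousOn A (closedBall c r))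
    (h : ∀ z₁ ∈ ball c r, ∀ z₂ ∈ ball c r,
      (1 - lam * ‖z₁ * z₂‖) * ‖z₁ - z₂‖ ≤ ‖z₁ * A z₂ - z₂ * A z₁‖) :
    ∀ z₁ ∈ closedBall c r, ∀ z₂ ∈ closedBall c r,
      (1 - lam * ‖z₁ * z₂‖) * ‖z₁ - z₂‖ ≤ ‖z₁ * A z₂ - z₂ * A z₁‖ := by
  have hclosure : closure (ball c r ×ˢ ball c r) = closedBall c r ×ˢ closedBall c r := by
    rw [closure_prod_eq, closure_ball c hr]
  intro z₁ hz₁ z₂ hz₂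
  have hmem : (z₁, z₂) ∈ closure (ball c r ×ˢ ball c r) := hclosure ▸ ⟨hz₁, hz₂⟩
  refine le_on_closure (f := fun p : ℂ × ℂ => (1 - lam * ‖p.1 * p.2‖) * ‖p.1 - p.2‖)
    (g := fun p => ‖p.1 * A p.2 - p.2 * A p.1‖) (fun p hp => h p.1 hp.1 p.2 hp.2)
    (by fun_prop) ?_ hmem
  rw [hclosure]
  have hA₁ : ContinuousOn (fun p : ℂ × ℂ => A p.1) (closedBall c r ×ˢ closedBall c r) :=
    hA.comp continuous_fst.continuousOn fun p hp => hp.1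
  have hA₂ : ContinuousOn (fun p : ℂ × ℂ => A p.2) (closedBall c r ×ˢ closedBall c r) :=
    hA.comp continuous_snd.continuousOn fun p hp => hp.2
  exact ((continuous_fst.continuousOn.mul hA₂).sub (continuous_snd.continuousOn.mul hA₁)).norm

theorem mul_norm_sub_pos_of_mem_closedBall {lam : ℝ} (hlam : lam ∈ Set.Ico (0 : ℝ) 1) {z₁ z₂ : ℂ}
    (hz₁ : z₁ ∈ closedBall (0 : ℂ) 1) (hz₂ : z₂ ∈ closedBall (0 : ℂ) 1) (hne : z₁ ≠ z₂) :
    0 < (1 - lam * ‖z₁ * z₂‖) * ‖z₁ - z₂‖ := by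
  rw [mem_closedBall_zero_iff] at hz₁ hz₂
  have hprod : ‖z₁ * z₂‖ ≤ 1 := by
    rw [norm_mul]; exact mul_le_one₀ hz₁ (norm_nonneg _) hz₂
  have : lam * ‖z₁ * z₂‖ < 1 := (mul_le_of_le_one_right hlam.1 hprod).trans_lt hlam.2
  exact mul_pos (by linarith) (norm_pos_iff.mpr (sub_ne_zero.mpr hne))

theorem injOn_div_of_pos_norm_mul_sub_mul {A : ℂ → ℂ} {s : Set ℂ}
    (h : ∀ z₁ ∈ s, ∀ z₂ ∈ s, z₁ ≠ z₂ → 0 < ‖z₁ * A z₂ - z₂ * A z₁‖) :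
    Set.InjOn (fun z => z / A z) {z ∈ s | A z ≠ 0} := by
  rintro z₁ ⟨hz₁, hA₁⟩ z₂ ⟨hz₂, hA₂⟩ heq
  by_contra hne
  have := h z₁ hz₁ z₂ hz₂ hne
  rw [(div_eq_div_iff hA₁ hA₂).mp heq, sub_self, norm_zero] at this
  exact this.false

/-- **Theorem 2(b).** Let `λ ∈ [0,1)` and let `Aₗ` be the continuous extension
to the closed unit disk of `Aₗ(z) = 1 + c z - λ z ∫₀ᶻ ω(t) dt` (with `ω`
holomorphic, `|ω| ≤ 1` on the open disk). Then for distinct `z₁, z₂` in the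
closed disk, `|z₁ Aₗ(z₂) - z₂ Aₗ(z₁)| ≥ (1 - λ |z₁ z₂|) |z₁ - z₂| > 0`; in
particular `z ↦ z / Aₗ(z)` is injective on the points of the closed disk where
`Aₗ ≠ 0`. -/
theorem stmt_6 (lam : ℝ) (hlam : lam ∈ Set.Ico (0 : ℝ) 1)
    (ω : ℂ → ℂ) (c : ℂ)
    (hω : DifferentiableOn ℂ ω (ball (0 : ℂ) 1))
    (hbd : ∀ z ∈ ball (0 : ℂ) 1, ‖ω z‖ ≤ 1)
    (Al : ℂ → ℂ)
    (hAlcont : ContinuousOn Al (closedBall (0 : ℂ) 1))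
    (hAl : ∀ z ∈ ball (0 : ℂ) 1, Al z = 1 + c * z - (lam : ℂ) * z * segInt ω 0 z) :
    (∀ z₁ ∈ closedBall (0 : ℂ) 1, ∀ z₂ ∈ closedBall (0 : ℂ) 1, z₁ ≠ z₂ →
        (1 - lam * ‖z₁ * z₂‖) * ‖z₁ - z₂‖ ≤ ‖z₁ * Al z₂ - z₂ * Al z₁‖ ∧
          0 < (1 - lam * ‖z₁ * z₂‖) * ‖z₁ - z₂‖) ∧
      Set.InjOn (fun z => z / Al z) {z ∈ closedBall (0 : ℂ) 1 | Al z ≠ 0} := by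
  have hopen : ∀ z₁ ∈ ball (0 : ℂ) 1, ∀ z₂ ∈ ball (0 : ℂ) 1,
      (1 - lam * ‖z₁ * z₂‖) * ‖z₁ - z₂‖ ≤ ‖z₁ * Al z₂ - z₂ * Al z₁‖ := by
    intro z₁ hz₁ z₂ hz₂
    have hlip : ‖segInt ω 0 z₂ - segInt ω 0 z₁‖ ≤ ‖z₁ - z₂‖ := by
      simpa [norm_sub_rev z₂ z₁] using
        norm_segInt_sub_segInt_le hω hbd (mem_ball_self one_pos) hz₁ hz₂
    rw [hAl z₁ hz₁, hAl z₂ hz₂]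
    exact le_norm_mul_sub_mul_of_lipschitz hlam.1 c hlip
  have hclosed := forall_closedBall_le_norm_mul_sub_mul one_ne_zero hAlcont hopen
  have hmain : ∀ z₁ ∈ closedBall (0 : ℂ) 1, ∀ z₂ ∈ closedBall (0 : ℂ) 1, z₁ ≠ z₂ →
      (1 - lam * ‖z₁ * z₂‖) * ‖z₁ - z₂‖ ≤ ‖z₁ * Al z₂ - z₂ * Al z₁‖ ∧
        0 < (1 - lam * ‖z₁ * z₂‖) * ‖z₁ - z₂‖ := fun z₁ hz₁ z₂ hz₂ hne =>
    ⟨hclosed z₁ hz₁ z₂ hz₂, mul_norm_sub_pos_of_mem_closedBall hlam hz₁ hz₂ hne⟩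
  refine ⟨hmain, injOn_div_of_pos_norm_mul_sub_mul fun z₁ hz₁ z₂ hz₂ hne => ?_⟩
  obtain ⟨hle, hpos⟩ := hmain z₁ hz₁ z₂ hz₂ hne
  exact hpos.trans_le hle
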